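/- arXiv:2509.04978 — 2 statements merged into one kernel-verified Lean document; each statement's English description precedes it below -/
import Mathlib

section
/- Let Λ be a Hopf R-order in K[G] with dual order A. Then ε_A(I(A))·Λ ⊆ R[G]; that is, for every x ∈ I(A) and every u ∈ Λ one has x(1_G)·u ∈ R[G]. -/
noncomputable section

open scoped BigOperators

section Core

variable (R : Type) [CommRing R] (K : Type) [Field K] [Algebra R K]
variable (G : Type) [Group G] [Fintype G] [DecidableEq G]

/-- The embedding of `K[G]` into the left factor of `K[G × G] ≅ K[G] ⊗_K K[G]`. -/
def incl1 (a : MonoidAlgebra K G) : MonoidAlgebra K (G × G) :=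
  MonoidAlgebra.ofCoeff (Finsupp.mapDomain (fun g => (g, (1 : G))) a.coeff)

/-- The embedding of `K[G]` into the right factor of `K[G × G] ≅ K[G] ⊗_K K[G]`. -/
def incl2 (a : MonoidAlgebra K G) : MonoidAlgebra K (G × G) :=
  MonoidAlgebra.ofCoeff (Finsupp.mapDomain (fun g => ((1 : G), g)) a.coeff)

/-- The comultiplication `Δ(g) = g ⊗ g` of `K[G]`, realized in `K[G × G] ≅ K[G] ⊗_K K[G]`. -/
def diagMap (u : MonoidAlgebra K G) : MonoidAlgebra K (G × G) :=
  MonoidAlgebra.ofCoeff (Finsupp.mapDomain (fun g : G => (g, g)) u.coeff)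

/-- The antipode `S(g) = g⁻¹` of `K[G]`. -/
def antipodeMap (u : MonoidAlgebra K G) : MonoidAlgebra K G :=
  MonoidAlgebra.ofCoeff (Finsupp.mapDomain (fun g : G => g⁻¹) u.coeff)

/-- A Hopf `R`-order `Λ` in `K[G]`: an `R`-subalgebra containing `R[G]`, finitely generated
as an `R`-module, spanning `K[G]` over `K`, with `Δ(Λ)` contained in the image of
`Λ ⊗_R Λ → K[G] ⊗_K K[G] ≅ K[G × G]`, `ε(Λ) ⊆ R` and `S(Λ) = Λ`. -/
structure IsHopfOrder (Λ : Subalgebra R (MonoidAlgebra K G)) : Prop where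
  grp_mem : ∀ g : G, MonoidAlgebra.of K G g ∈ Λ
  fg : Λ.toSubmodule.FG
  spans : Submodule.span K (Λ : Set (MonoidAlgebra K G)) = ⊤
  comul_mem : ∀ u ∈ Λ, diagMap K G u ∈ Submodule.span R
    {x : MonoidAlgebra K (G × G) | ∃ a ∈ Λ, ∃ b ∈ Λ, x = incl1 K G a * incl2 K G b}
  counit_mem : ∀ u ∈ Λ, (∑ g : G, u.coeff g) ∈ Set.range (algebraMap R K)
  antipode_mem : ∀ u ∈ Λ, antipodeMap K G u ∈ Λ

/-- The dual order `A` of `Λ`, inside `Map(G, K)`: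
`A = {f : G → K | ∑ u_g f(g) ∈ R for all ∑ u_g g ∈ Λ}`. -/
def dualOrder (Λ : Subalgebra R (MonoidAlgebra K G)) : Set (G → K) :=
  {f | ∀ u ∈ Λ, (∑ g : G, u.coeff g * f g) ∈ Set.range (algebraMap R K)}

/-- The action of `K[G]` on `Map(G, K)`: `(u·f)(h) = ∑_g u_g f(h g)`. -/
def actOn (u : MonoidAlgebra K G) (f : G → K) : G → K :=
  fun h => ∑ g : G, u.coeff g * f (h * g)

/-- The integrals `I(A)` of the dual order `A`:
`I(A) = {x ∈ A | a·x = a(1)·x for all a ∈ A}` (pointwise product). -/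
def integrals (Λ : Subalgebra R (MonoidAlgebra K G)) : Set (G → K) :=
  {x | x ∈ dualOrder R K G Λ ∧
    ∀ a ∈ dualOrder R K G Λ, ∀ h : G, a h * x h = a 1 * x h}

/-- `ε_A(I(A)) = {x(1) : x ∈ I(A)}`. -/
def epsIntegrals (Λ : Subalgebra R (MonoidAlgebra K G)) : Set K :=
  {y | ∃ x ∈ integrals R K G Λ, y = x 1}

end Core

/-!
Since `Λ` is finitely generated, a single `d ≠ 0` in `R` clears all denominators of `Λ`, so
`d • δ_h` lies in the dual order `A` for every `h`. Testing the integral property of `x ∈ I(A)`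
against it gives `d • x h = 0` for `h ≠ 1`: integrals are multiples of `δ_1`. Hence pairing `x`
with `u * g⁻¹ ∈ Λ` gives exactly `x 1 * u_g`, which lies in `R` because `x ∈ A`.
-/

open IsLocalization

lemma exists_isInteger_smul_coeff_of_fg {R K G : Type*} [CommRing R] [CommRing K] [Algebra R K]
    [Finite G] (S : Submonoid R) [IsLocalization S K] {M : Submodule R (MonoidAlgebra K G)}
    (hM : M.FG) :
    ∃ d : S, ∀ u ∈ M, ∀ g, IsInteger R ((d : R) • u.coeff g) := by
  obtain ⟨s, rfl⟩ := hM
  obtain ⟨d, hd⟩ := exist_integer_multiples_of_finite S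
    (fun p : s × G => (p.1 : MonoidAlgebra K G).coeff p.2)
  refine ⟨d, fun u hu => ?_⟩
  induction hu using Submodule.span_induction with
  | mem u hu => exact fun g => hd (⟨u, hu⟩, g)
  | zero => simpa using fun _ => isInteger_zero
  | add u v _ _ hu hv =>
    intro g
    simpa only [MonoidAlgebra.coeff_add, Finsupp.add_apply, smul_add]
      using isInteger_add (hu g) (hv g)
  | smul r u _ hu =>
    intro g
    simpa only [MonoidAlgebra.coeff_smul_apply, smul_comm _ r]
      using isInteger_smul (a := r) (hu g)

section

variable {R K G : Type} [CommRing R] [Field K] [Algebra R K]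
  [Group G] [Fintype G] {Λ : Subalgebra R (MonoidAlgebra K G)}

lemma pi_single_mem_dualOrder [DecidableEq G] {c : R}
    (hc : ∀ u ∈ Λ, ∀ g, IsInteger R (c • u.coeff g)) (h : G) :
    Pi.single h (algebraMap R K c) ∈ dualOrder R K G Λ := by
  intro u hu
  obtain ⟨r, hr⟩ := hc u hu h
  exact ⟨r, by simpa [Pi.single_apply, Algebra.smul_def, mul_comm] using hr⟩

lemma integrals_apply_eq_zero_of_ne_one [DecidableEq G] [IsFractionRing R K]
    (hΛ : Λ.toSubmodule.FG) {x : G → K} (hx : x ∈ integrals R K G Λ) {h : G} (hh : h ≠ 1) :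
    x h = 0 := by
  obtain ⟨d, hd⟩ := exists_isInteger_smul_coeff_of_fg (nonZeroDivisors R) hΛ
  have hδ := hx.2 _ (pi_single_mem_dualOrder hd h) h
  rw [Pi.single_eq_same, Pi.single_eq_of_ne hh.symm, zero_mul] at hδ
  exact (mul_eq_zero.mp hδ).resolve_left (IsLocalization.map_units K d).ne_zero

lemma sum_coeff_mul_of_inv_mul_eq_of_apply_eq_zero {x : G → K} (hx : ∀ h ≠ 1, x h = 0)
    (u : MonoidAlgebra K G) (g : G) :
    ∑ h, (u * MonoidAlgebra.of K G g⁻¹).coeff h * x h = u.coeff g * x 1 := by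
  rw [Finset.sum_eq_single 1 (fun h _ hh => by rw [hx h hh, mul_zero])
    (fun h => absurd (Finset.mem_univ 1) h)]
  simp [MonoidAlgebra.of_apply, MonoidAlgebra.coeff_mul_single_apply]

end

theorem statement1_general
    (R : Type) [CommRing R]
    (K : Type) [Field K] [Algebra R K] [IsFractionRing R K]
    (G : Type) [Group G] [Fintype G] [DecidableEq G]
    (Λ : Subalgebra R (MonoidAlgebra K G)) (hΛ : IsHopfOrder R K G Λ) :
    ∀ x ∈ integrals R K G Λ, ∀ u ∈ Λ, ∀ g : G,
      x 1 * u.coeff g ∈ Set.range (algebraMap R K) := by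
  intro x hx u hu g
  have hsupp : ∀ h ≠ 1, x h = 0 := fun h => integrals_apply_eq_zero_of_ne_one hΛ.fg hx
  obtain ⟨r, hr⟩ := hx.1 _ (Λ.mul_mem hu (hΛ.grp_mem g⁻¹))
  exact ⟨r, by rw [hr, sum_coeff_mul_of_inv_mul_eq_of_apply_eq_zero hsupp, mul_comm]⟩

/-- For a Hopf `R`-order `Λ` in `K[G]` with dual order `A`, one has
`ε_A(I(A))·Λ ⊆ R[G]`: for every `x ∈ I(A)` and `u ∈ Λ`, the element `x(1)·u` of `K[G]`
has all its coefficients in `R`. -/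
theorem statement1
    (R : Type) [CommRing R] [IsDomain R] [IsDedekindDomain R]
    (K : Type) [Field K] [Algebra R K] [IsFractionRing R K]
    (G : Type) [Group G] [Fintype G] [DecidableEq G]
    (Λ : Subalgebra R (MonoidAlgebra K G)) (hΛ : IsHopfOrder R K G Λ) :
    ∀ x ∈ integrals R K G Λ, ∀ u ∈ Λ, ∀ g : G,
      x 1 * u.coeff g ∈ Set.range (algebraMap R K) :=
  statement1_general R K G Λ hΛ
end
end

section
/- Let k be a perfect field of characteristic p > 0 and let A be a finite-dimensional commutative Hopf k-algebra that is a local ring (so the finite k-group scheme Spec A is connected). Let B be a nonzero finite-dimensional commutative k-algebra equipped with a right A-comodule algebra structure ρ : B → B ⊗_k A (a k-algebra homomorphism satisfying (ρ ⊗ id)∘ρ = (id ⊗ Δ)∘ρ and (id ⊗ ε)∘ρ = id) such that the Galois map B ⊗_k B → B ⊗_k A, b ⊗ b' ↦ (b ⊗ 1)·ρ(b'), is bijective (i.e. Spec B is a torsor under Spec A over Spec k). Then there exists a k-algebra homomorphism B → k; consequently every such torsor is trivial, i.e. H¹(Spec k, Spec A) = 0. -/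
noncomputable section

open scoped TensorProduct

/-- The Galois map `B ⊗_k B → B ⊗_k A`, `b ⊗ b' ↦ (b ⊗ 1)·ρ(b')`, of an `A`-comodule
algebra `B`. -/
def galoisMap (k B A : Type) [CommRing k] [CommRing B] [CommRing A]
    [Algebra k B] [Algebra k A] (ρ : B →ₐ[k] B ⊗[k] A) :
    B ⊗[k] B →ₗ[k] B ⊗[k] A :=
  TensorProduct.lift (LinearMap.mk₂ k
    (fun b b' => (b ⊗ₜ[k] (1 : A)) * ρ b')
    (fun b₁ b₂ b' => by simp [TensorProduct.add_tmul, add_mul])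
    (fun c b b' => by beta_reduce; rw [show (c • b) ⊗ₜ[k] (1 : A) = c • (b ⊗ₜ[k] (1 : A)) from (TensorProduct.smul_tmul' c b 1).symm, smul_mul_assoc])
    (fun b b₁' b₂' => by simp [mul_add])
    (fun c b b' => by simp [mul_smul_comm]))

/-!
Applying `id ⊗ ε` to the Galois map sends `b ⊗ 1 - 1 ⊗ b` into `B ⊗ ker ε = B ⊗ 𝔪_A`, which
consists of nilpotents because `A` is Artinian local; as the Galois map is an injective ring
map, `b ⊗ 1 - 1 ⊗ b` is nilpotent in `B ⊗ B`. For a residue field `K` of `B` this gives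
`a ⊗ 1 = 1 ⊗ a` in `K ⊗ K`, which is reduced because `K/k` is separable (`k` is perfect);
so the multiplication `K ⊗ K → K` is injective, and a finite extension with this property is `k`.
-/

section GaloisMap

variable {k B A : Type} [CommRing k] [CommRing B] [CommRing A] [Algebra k B] [Algebra k A]

@[simp]
lemma galoisMap_tmul (ρ : B →ₐ[k] B ⊗[k] A) (b b' : B) :
    galoisMap k B A ρ (b ⊗ₜ b') = (b ⊗ₜ 1) * ρ b' :=
  rfl

lemma galoisMap_eq_lift (ρ : B →ₐ[k] B ⊗[k] A) :
    galoisMap k B A ρ =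
      (Algebra.TensorProduct.lift Algebra.TensorProduct.includeLeft ρ
        fun _ _ ↦ Commute.all _ _).toLinearMap :=
  TensorProduct.ext' fun _ _ ↦ rfl

lemma isNilpotent_of_isNilpotent_galoisMap {ρ : B →ₐ[k] B ⊗[k] A}
    (hinj : Function.Injective (galoisMap k B A ρ)) {x : B ⊗[k] B}
    (hx : IsNilpotent (galoisMap k B A ρ x)) : IsNilpotent x := by
  simp only [galoisMap_eq_lift, AlgHom.coe_toLinearMap] at hinj hx
  exact (IsNilpotent.map_iff hinj).mp hx

end GaloisMap

lemma isNilpotent_of_lTensor_algHom_eq_zero {R B A : Type*} [CommRing R] [CommRing B]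
    [CommRing A] [Algebra R B] [Algebra R A] (f : A →ₐ[R] R) (hf : RingHom.ker f ≤ nilradical A)
    {x : B ⊗[R] A} (hx : f.toLinearMap.lTensor B x = 0) : IsNilpotent x := by
  have hsurj : Function.Surjective f.toLinearMap := fun r ↦ ⟨algebraMap R A r, f.commutes r⟩
  obtain ⟨y, rfl⟩ :=
    (lTensor_exact B (LinearMap.exact_subtype_ker_map f.toLinearMap) hsurj x).mp hx
  clear hx
  induction y using TensorProduct.induction_on with
  | zero => simp
  | tmul b a =>
    have ha : IsNilpotent (a : A) := hf (LinearMap.mem_ker.mp a.2)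
    rw [LinearMap.lTensor_tmul, Submodule.subtype_apply,
      show b ⊗ₜ[R] (a : A) = (b ⊗ₜ[R] 1) * (1 ⊗ₜ[R] (a : A)) by simp]
    exact (Commute.all _ _).isNilpotent_mul_left (ha.map Algebra.TensorProduct.includeRight)
  | add y₁ y₂ h₁ h₂ =>
    rw [map_add]
    exact (Commute.all _ _).isNilpotent_add h₁ h₂

lemma ker_counitAlgHom_le_nilradical (k A : Type*) [Field k] [CommRing A] [Bialgebra k A]
    [FiniteDimensional k A] [IsLocalRing A] :
    RingHom.ker (Bialgebra.counitAlgHom k A) ≤ nilradical A := by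
  have : IsArtinianRing A := .of_finite k A
  rw [Ring.KrullDimLE.nilradical_eq_maximalIdeal A]
  exact (IsLocalRing.eq_maximalIdeal (RingHom.ker_isMaximal_of_surjective _
    fun c ↦ ⟨algebraMap k A c, (Bialgebra.counitAlgHom k A).commutes c⟩)).le

lemma isNilpotent_tmul_one_sub_one_tmul_of_injective_galoisMap {k B A : Type} [CommRing k]
    [CommRing B] [CommRing A] [Algebra k B] [Bialgebra k A]
    (hA : RingHom.ker (Bialgebra.counitAlgHom k A) ≤ nilradical A) (ρ : B →ₐ[k] B ⊗[k] A)
    (hcounit : ∀ b : B,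
      TensorProduct.rid k B
        (LinearMap.lTensor B (Coalgebra.counit (R := k) (A := A)) (ρ b)) = b)
    (hinj : Function.Injective (galoisMap k B A ρ)) (b : B) :
    IsNilpotent (b ⊗ₜ[k] (1 : B) - 1 ⊗ₜ[k] b) := by
  apply isNilpotent_of_isNilpotent_galoisMap hinj
  apply isNilpotent_of_lTensor_algHom_eq_zero _ hA
  have hρ : LinearMap.lTensor B (Coalgebra.counit (R := k) (A := A)) (ρ b) = b ⊗ₜ 1 :=
    (TensorProduct.rid k B).injective (by rw [hcounit, TensorProduct.rid_tmul, one_smul])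
  rw [map_sub, map_sub, galoisMap_tmul, galoisMap_tmul, map_one, mul_one,
    ← Algebra.TensorProduct.one_def, one_mul, Bialgebra.toLinearMap_counitAlgHom, hρ,
    LinearMap.lTensor_tmul, Bialgebra.counit_one, sub_self]

lemma surjective_algebraMap_of_isNilpotent_tmul_sub {k K : Type*} [Field k] [Field K]
    [Algebra k K] [FiniteDimensional k K] [Algebra.IsSeparable k K]
    (h : ∀ a : K, IsNilpotent (a ⊗ₜ[k] (1 : K) - 1 ⊗ₜ[k] a)) :
    Function.Surjective (algebraMap k K) := by
  have : Algebra.FormallyUnramified k K := .of_isSeparable k K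
  have : IsReduced (K ⊗[k] K) := Algebra.FormallyUnramified.isReduced_of_field K _
  refine Algebra.isEpi_iff_surjective_algebraMap_of_finite.mp
    ((Algebra.isEpi_iff_forall_one_tmul_eq k K).mpr fun a ↦ ?_)
  exact (sub_eq_zero.mp (h a).eq_zero).symm

lemma nonempty_algHom_of_isNilpotent_tmul_sub {k B : Type*} [Field k] [PerfectField k]
    [CommRing B] [Algebra k B] [Nontrivial B] [FiniteDimensional k B]
    (h : ∀ b : B, IsNilpotent (b ⊗ₜ[k] (1 : B) - 1 ⊗ₜ[k] b)) : Nonempty (B →ₐ[k] k) := by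
  obtain ⟨m, hm⟩ := Ideal.exists_maximal B
  let : Field (B ⧸ m) := Ideal.Quotient.field m
  let π : B →ₐ[k] B ⧸ m := Ideal.Quotient.mkₐ k m
  have hπ : Function.Surjective π := Ideal.Quotient.mkₐ_surjective k m
  have : FiniteDimensional k (B ⧸ m) := Module.Finite.of_surjective π.toLinearMap hπ
  have hsurj : Function.Surjective (algebraMap k (B ⧸ m)) := by
    refine surjective_algebraMap_of_isNilpotent_tmul_sub fun a ↦ ?_
    obtain ⟨b, rfl⟩ := hπ a
    simpa using (h b).map (Algebra.TensorProduct.map π π)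
  let e : k ≃ₐ[k] B ⧸ m :=
    .ofBijective (Algebra.ofId k _) ⟨(algebraMap k _).injective, hsurj⟩
  exact ⟨e.symm.toAlgHom.comp π⟩

theorem statement19_general
    (k : Type) [Field k] [PerfectField k]
    (A : Type) [CommRing A] [HopfAlgebra k A] [FiniteDimensional k A] [IsLocalRing A]
    (B : Type) [CommRing B] [Algebra k B] [Nontrivial B] [FiniteDimensional k B]
    (ρ : B →ₐ[k] B ⊗[k] A)
    (hcounit : ∀ b : B,
      TensorProduct.rid k B
        (LinearMap.lTensor B (Coalgebra.counit (R := k) (A := A)) (ρ b)) = b)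
    (hgalois : Function.Bijective (galoisMap k B A ρ)) :
    Nonempty (B →ₐ[k] k) :=
  nonempty_algHom_of_isNilpotent_tmul_sub <|
    isNilpotent_tmul_one_sub_one_tmul_of_injective_galoisMap
      (ker_counitAlgHom_le_nilradical k A) ρ hcounit hgalois.injective

/-- Over a perfect field `k` of characteristic `p > 0`, let `A` be a
finite-dimensional commutative Hopf `k`-algebra which is a local ring (so `Spec A` is a
connected finite `k`-group scheme), and let `B` be a nonzero finite-dimensional commutative
`A`-comodule algebra whose Galois map `B ⊗_k B → B ⊗_k A` is bijective (a torsor under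
`Spec A`).  Then there is a `k`-algebra homomorphism `B → k`; hence the torsor is trivial,
i.e. `H¹(Spec k, Spec A) = 0`. -/
theorem statement19
    (k : Type) [Field k] [PerfectField k] (p : ℕ) (hp : p.Prime) [CharP k p]
    (A : Type) [CommRing A] [HopfAlgebra k A] [FiniteDimensional k A] [IsLocalRing A]
    (B : Type) [CommRing B] [Algebra k B] [Nontrivial B] [FiniteDimensional k B]
    (ρ : B →ₐ[k] B ⊗[k] A)
    (hcoassoc : ∀ b : B,
      LinearMap.rTensor A ρ.toLinearMap (ρ b) =
        (TensorProduct.assoc k B A A).symm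
          (LinearMap.lTensor B (Coalgebra.comul (R := k) (A := A)) (ρ b)))
    (hcounit : ∀ b : B,
      TensorProduct.rid k B
        (LinearMap.lTensor B (Coalgebra.counit (R := k) (A := A)) (ρ b)) = b)
    (hgalois : Function.Bijective (galoisMap k B A ρ)) :
    Nonempty (B →ₐ[k] k) :=
  statement19_general k A B ρ hcounit hgalois
end
end
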